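/- There exists a countable subset C of (0,π)⁴ such that for every (ω₁,ω₂,ψ₁,ψ₂) ∈ (0,π)⁴ with (ω₁,ω₂,ψ₁,ψ₂) ∉ C, both (1/(MN)) Σ_{n=1}^{N} Σ_{m=1}^{M} cos(ω₁ m + ω₂ m² + ψ₁ n + ψ₂ n²) → 0 and (1/(MN)) Σ_{n=1}^{N} Σ_{m=1}^{M} sin(ω₁ m + ω₂ m² + ψ₁ n + ψ₂ n²) → 0 as min{M,N} → ∞. -/

import Mathlib

open Filter Real

/-!
Write `S(a, b; M) = ∑_{m ≤ M} e^{i(am + bm²)}`. The two double sums are the real and imaginary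
parts of `S(ω₁, ω₂; M) · S(ψ₁, ψ₂; N)`, and `|S(a, b; M)| ≤ M`, so it suffices that
`S(a, b; M) = o(M)` for one of the two pairs; outside `C = (πℚ)⁴` one pair has a coordinate
outside `πℚ`.

If `b ∉ πℚ`, van der Corput's inequality bounds `|S|²` by correlation sums of the summand with
its shifts by `k`; these are geometric sums with ratio `e^{2ibk} ≠ 1`, hence bounded, which gives
`|S/M|² ≲ 1/H` for every window length `H`. If `b = πp/q` but `a ∉ πℚ`, shifting `m` by `2q`
multiplies the summand by `c = e^{2iqa} ≠ 1`, so `(1 - c) S` telescopes to a bounded quantity.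
-/

open Finset ComplexConjugate

theorem Finset.sum_comp_sub_eq_of_add_mem {G β : Type*} [AddCommGroup G] [AddCommMonoid β]
    {f : G → β} {s W : Finset G} {h : G} (hf : ∀ n ∉ s, f n = 0) (hW : ∀ n ∈ s, n + h ∈ W) :
    ∑ m ∈ W, f (m - h) = ∑ n ∈ s, f n := by
  have hsub : s.map (addRightEmbedding h) ⊆ W := by
    simpa [Finset.map_subset_iff_subset_preimage, Finset.subset_iff] using hW
  rw [← sum_subset hsub fun m _ hm => hf _ fun hs => hm (mem_map.2 ⟨m - h, hs, by simp⟩)]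
  simp

/-- Van der Corput's inequality: average `u` over the shifts `D` before applying Cauchy–Schwarz
on the window `W`. -/
theorem sq_card_mul_norm_sum_sq_le {𝕜 G : Type*} [RCLike 𝕜] [AddCommGroup G] (u : G → 𝕜)
    (s D W : Finset G) (hu : ∀ n ∉ s, u n = 0) (hW : ∀ n ∈ s, ∀ h ∈ D, n + h ∈ W) :
    (#D : ℝ) ^ 2 * ‖∑ n ∈ s, u n‖ ^ 2 ≤
      #W * ∑ h ∈ D, ∑ h' ∈ D, ‖∑ n ∈ s, u (n + (h' - h)) * conj (u n)‖ := by
  set T : G → 𝕜 := fun m => ∑ h ∈ D, u (m - h)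
  have hT : ∑ m ∈ W, T m = #D * ∑ n ∈ s, u n := by
    rw [sum_comm, sum_congr rfl fun h hh => sum_comp_sub_eq_of_add_mem hu fun n hn => hW n hn h hh,
      sum_const, nsmul_eq_mul]
  have hcorr : ∑ m ∈ W, T m * conj (T m) =
      ∑ h ∈ D, ∑ h' ∈ D, ∑ n ∈ s, u (n + (h' - h)) * conj (u n) := by
    simp_rw [T, map_sum, sum_mul_sum]
    rw [sum_comm]
    refine sum_congr rfl fun h _ => ?_
    rw [sum_comm]
    refine sum_congr rfl fun h' hh' => ?_
    rw [← sum_comp_sub_eq_of_add_mem (h := h') (W := W) (by simp +contextual [hu])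
      fun n hn => hW n hn h' hh']
    simp only [sub_add_sub_cancel]
  have hsq : ∑ m ∈ W, ‖T m‖ ^ 2 ≤ ‖∑ m ∈ W, T m * conj (T m)‖ := by
    refine le_of_eq_of_le ?_ (RCLike.re_le_norm _)
    simp only [RCLike.mul_conj, ← RCLike.ofReal_pow, map_sum, RCLike.ofReal_re]
  calc (#D : ℝ) ^ 2 * ‖∑ n ∈ s, u n‖ ^ 2 = ‖∑ m ∈ W, T m‖ ^ 2 := by
        rw [hT, norm_mul, RCLike.norm_natCast, mul_pow]
    _ ≤ (∑ m ∈ W, ‖T m‖) ^ 2 := by gcongr; exact norm_sum_le _ _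
    _ ≤ #W * ∑ m ∈ W, ‖T m‖ ^ 2 := sq_sum_le_card_mul_sum_sq
    _ ≤ #W * ∑ h ∈ D, ∑ h' ∈ D, ‖∑ n ∈ s, u (n + (h' - h)) * conj (u n)‖ := by
        gcongr
        refine hsq.trans ?_
        rw [hcorr]
        exact (norm_sum_le _ _).trans (sum_le_sum fun h _ => norm_sum_le _ _)

theorem norm_geom_sum_le {𝕜 : Type*} [NormedField 𝕜] {z : 𝕜} (hz : ‖z‖ ≤ 1) (hz1 : z ≠ 1)
    (n : ℕ) : ‖∑ i ∈ range n, z ^ i‖ ≤ 2 / ‖1 - z‖ := by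
  rw [geom_sum_eq hz1, norm_div, norm_sub_rev z]
  gcongr
  calc ‖z ^ n - 1‖ ≤ ‖z‖ ^ n + 1 := by simpa using norm_sub_le (z ^ n) 1
    _ ≤ 2 := by linarith [pow_le_one₀ (norm_nonneg z) hz (n := n)]

theorem norm_sum_zpow_Icc_le {𝕜 : Type*} [NormedField 𝕜] {z : 𝕜} (hz : ‖z‖ = 1) (hz1 : z ≠ 1)
    (p q : ℤ) : ‖∑ n ∈ Icc p q, z ^ n‖ ≤ 2 / ‖1 - z‖ := by
  have hz0 : z ≠ 0 := norm_ne_zero_iff.1 (by rw [hz]; exact one_ne_zero)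
  rw [Int.Icc_eq_finset_map, sum_map]
  simp only [Function.Embedding.trans_apply, Nat.castEmbedding_apply, addLeftEmbedding_apply,
    zpow_add₀ hz0, zpow_natCast, ← mul_sum, norm_mul, norm_zpow, hz, one_zpow, one_mul]
  exact norm_geom_sum_le hz.le hz1 _

theorem norm_sum_range_le_of_add_period {𝕜 : Type*} [NormedField 𝕜] {u : ℕ → 𝕜} {B : ℝ}
    (hu : ∀ m, ‖u m‖ ≤ B) {P : ℕ} {c : 𝕜} (hc : c ≠ 1) (hper : ∀ m, u (m + P) = c * u m)
    (M : ℕ) : ‖∑ m ∈ range M, u m‖ ≤ 2 * P * B / ‖1 - c‖ := by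
  have htelescope : (1 - c) * ∑ m ∈ range M, u m =
      ∑ m ∈ range P, u m - ∑ m ∈ range P, u (M + m) := by
    have h₁ := sum_range_add u M P
    have h₂ := sum_range_add u P M
    simp only [add_comm P, hper, ← mul_sum] at h₂
    linear_combination h₂ - h₁
  have hB : ∀ f : ℕ → 𝕜, (∀ m, ‖f m‖ ≤ B) → ‖∑ m ∈ range P, f m‖ ≤ P * B := fun f hf => by
    simpa using norm_sum_le_of_le (range P) fun m _ => hf m
  rw [le_div_iff₀ (norm_pos_iff.2 (sub_ne_zero.2 hc.symm)), mul_comm, ← norm_mul, htelescope]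
  linarith [norm_sub_le (∑ m ∈ range P, u m) (∑ m ∈ range P, u (M + m)), hB u hu,
    hB (fun m => u (M + m)) fun m => hu _]

theorem tendsto_mul_prod_of_tendsto_zero_or {α β : Type*} {la : Filter α} {lb : Filter β}
    {x : α → ℝ} {y : β → ℝ} (hx : ∀ i, x i ∈ Set.Icc 0 1) (hy : ∀ j, y j ∈ Set.Icc 0 1)
    (h : Tendsto x la (nhds 0) ∨ Tendsto y lb (nhds 0)) :
    Tendsto (fun p : α × β => x p.1 * y p.2) (la ×ˢ lb) (nhds 0) := by
  have hnonneg (p : α × β) : 0 ≤ x p.1 * y p.2 := mul_nonneg (hx _).1 (hy _).1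
  rcases h with h | h
  · exact squeeze_zero hnonneg (fun p => mul_le_of_le_one_right (hx _).1 (hy _).2)
      (h.comp tendsto_fst)
  · exact squeeze_zero hnonneg (fun p => mul_le_of_le_one_left (hy _).1 (hx _).2)
      (h.comp tendsto_snd)

noncomputable def quadPhase (a b x : ℝ) : ℂ := Complex.exp (↑(a * x + b * x ^ 2) * Complex.I)

noncomputable def weylSum (a b : ℝ) (M : ℕ) : ℂ := ∑ m ∈ Icc 1 M, quadPhase a b m

theorem norm_quadPhase (a b x : ℝ) : ‖quadPhase a b x‖ = 1 :=
  Complex.norm_exp_ofReal_mul_I _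

theorem quadPhase_add_mul_conj (a b x y : ℝ) :
    quadPhase a b (x + y) * conj (quadPhase a b x) =
      quadPhase a b y * Complex.exp (↑(2 * b * y * x) * Complex.I) := by
  simp only [quadPhase, ← Complex.exp_conj, ← Complex.exp_add, map_mul, Complex.conj_ofReal,
    Complex.conj_I]
  congr 1
  push_cast
  ring

theorem norm_weylSum_le (a b : ℝ) (M : ℕ) : ‖weylSum a b M‖ ≤ M := by
  simpa [weylSum, norm_quadPhase] using norm_sum_le (Icc 1 M) fun m : ℕ => quadPhase a b m

theorem weylSum_eq_sum_range (a b : ℝ) (M : ℕ) :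
    weylSum a b M = ∑ m ∈ range M, quadPhase a b (m + 1 : ℕ) := by
  rw [weylSum, range_eq_Ico, sum_Ico_add' (fun m : ℕ => quadPhase a b m), Ico_add_one_right_eq_Icc]

def ratMulPi : Set ℝ := Set.range fun q : ℚ => (q : ℝ) * π

theorem mem_ratMulPi_of_exp_eq_one {x : ℝ} {k : ℤ} (hk : k ≠ 0)
    (h : Complex.exp (↑(k * x) * Complex.I) = 1) : x ∈ ratMulPi := by
  obtain ⟨n, hn⟩ := Complex.exp_eq_one_iff.1 h
  have hkx : k * x = n * (2 * π) := by
    have := mul_right_cancel₀ Complex.I_ne_zero (hn.trans (mul_assoc _ _ _).symm)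
    exact_mod_cast this
  refine ⟨2 * n / k, ?_⟩
  have hk' : (k : ℝ) ≠ 0 := Int.cast_ne_zero.2 hk
  push_cast
  field_simp
  linarith

theorem quadPhase_add_two_mul_den (a : ℝ) (q : ℚ) (m : ℕ) :
    quadPhase a (q * π) (m + 2 * q.den : ℕ) =
      Complex.exp (↑(a * (2 * q.den : ℕ)) * Complex.I) * quadPhase a (q * π) m := by
  have hnum : ((q : ℝ) : ℂ) * (q.den : ℂ) = (q.num : ℂ) := by exact_mod_cast q.mul_den_eq_num
  rw [quadPhase, quadPhase, ← Complex.exp_add, Complex.exp_eq_exp_iff_exists_int]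
  -- `q π ((m + 2 den)² - m²) = 2π · 2 num (m + den)`
  refine ⟨2 * q.num * (m + q.den), ?_⟩
  push_cast
  linear_combination (4 * π * (m + q.den) * Complex.I : ℂ) * hnum

theorem tendsto_norm_weylSum_div_of_mem_ratMulPi {a b : ℝ} (ha : a ∉ ratMulPi)
    (hb : b ∈ ratMulPi) : Tendsto (fun M : ℕ => ‖weylSum a b M‖ / M) atTop (nhds 0) := by
  obtain ⟨q, rfl⟩ := hb
  set c := Complex.exp (↑(a * (2 * q.den : ℕ)) * Complex.I) with hc_def
  have hc : c ≠ 1 := by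
    refine fun h => ha (mem_ratMulPi_of_exp_eq_one (k := 2 * q.den) (by positivity) ?_)
    rw [← h, hc_def]
    push_cast
    ring_nf
  have hbound (M : ℕ) : ‖weylSum a (q * π) M‖ ≤ 2 * (2 * q.den : ℕ) * 1 / ‖1 - c‖ := by
    rw [weylSum_eq_sum_range]
    refine norm_sum_range_le_of_add_period (fun m => (norm_quadPhase _ _ _).le) hc
      (fun m => ?_) M
    rw [add_right_comm, quadPhase_add_two_mul_den]
  exact squeeze_zero (fun M => by positivity)
    (fun M => div_le_div_of_nonneg_right (hbound M) M.cast_nonneg)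
    (tendsto_const_div_atTop_nhds_zero_nat _)

noncomputable def truncQuadPhase (a b : ℝ) (M : ℕ) (n : ℤ) : ℂ :=
  if n ∈ Icc 1 (M : ℤ) then quadPhase a b n else 0

theorem norm_truncQuadPhase_le (a b : ℝ) (M : ℕ) (n : ℤ) : ‖truncQuadPhase a b M n‖ ≤ 1 := by
  unfold truncQuadPhase
  split_ifs
  · exact (norm_quadPhase _ _ _).le
  · simp

theorem sum_truncQuadPhase (a b : ℝ) (M : ℕ) :
    ∑ n ∈ Icc 1 (M : ℤ), truncQuadPhase a b M n = weylSum a b M := by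
  simp only [truncQuadPhase, weylSum]
  rw [sum_congr rfl fun n hn => if_pos hn]
  refine sum_nbij' Int.toNat (↑) (fun n hn => ?_) (fun m hm => ?_) (fun n hn => ?_)
    (fun m _ => Int.toNat_natCast m) (fun n hn => ?_)
  all_goals simp only [mem_Icc] at *
  any_goals omega
  rw [← Int.cast_natCast, Int.toNat_of_nonneg (by omega)]

theorem norm_sum_truncQuadPhase_mul_conj_le (a b : ℝ) (M : ℕ) {k : ℤ}
    (hk : Complex.exp (↑(2 * b * k) * Complex.I) ≠ 1) :
    ‖∑ n ∈ Icc 1 (M : ℤ), truncQuadPhase a b M (n + k) * conj (truncQuadPhase a b M n)‖ ≤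
      2 / ‖1 - Complex.exp (↑(2 * b * k) * Complex.I)‖ := by
  set z := Complex.exp (↑(2 * b * k) * Complex.I) with hz
  have hterm : ∀ n ∈ Icc 1 (M : ℤ), truncQuadPhase a b M (n + k) * conj (truncQuadPhase a b M n) =
      if n ∈ Icc (1 - k) (M - k) then quadPhase a b k * z ^ n else 0 := by
    intro n hn
    have hshift : n + k ∈ Icc 1 (M : ℤ) ↔ n ∈ Icc (1 - k) (M - k) := by
      simp only [mem_Icc]; omega
    simp only [truncQuadPhase, if_pos hn, ← hshift]
    split_ifs
    · rw [Int.cast_add, quadPhase_add_mul_conj, hz, ← Complex.exp_int_mul]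
      push_cast
      ring_nf
    · rw [zero_mul]
  have hinter : Icc 1 (M : ℤ) ∩ Icc (1 - k) (M - k) = Icc (max 1 (1 - k)) (min M (M - k)) := by
    ext n; simp only [mem_inter, mem_Icc, max_le_iff, le_min_iff]; omega
  rw [sum_congr rfl hterm, sum_ite_mem, hinter, ← mul_sum, norm_mul, norm_quadPhase, one_mul]
  exact norm_sum_zpow_Icc_le (Complex.norm_exp_ofReal_mul_I _) hk _ _

theorem exists_sq_mul_norm_weylSum_sq_le {a b : ℝ}
    (hb : ∀ k : ℤ, k ≠ 0 → Complex.exp (↑(2 * b * k) * Complex.I) ≠ 1) (H : ℕ) :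
    ∃ C : ℝ, ∀ M : ℕ, (H : ℝ) ^ 2 * ‖weylSum a b M‖ ^ 2 ≤ (M + H) * (H * M + C) := by
  set B : ℤ → ℝ := fun k => 2 / ‖1 - Complex.exp (↑(2 * b * k) * Complex.I)‖
  refine ⟨∑ h ∈ Ico 0 (H : ℤ), ∑ h' ∈ Ico 0 (H : ℤ), B (h' - h), fun M => ?_⟩
  set u := truncQuadPhase a b M
  have hcorr (k : ℤ) :
      ‖∑ n ∈ Icc 1 (M : ℤ), u (n + k) * conj (u n)‖ ≤ (if k = 0 then (M : ℝ) else 0) + B k := by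
    rcases eq_or_ne k 0 with rfl | hk
    · refine (norm_sum_le_of_le (n := fun _ => 1) _ fun n _ => ?_).trans
        (le_add_of_le_of_nonneg (by simp) (by positivity))
      rw [add_zero, norm_mul, RCLike.norm_conj]
      exact mul_le_one₀ (norm_truncQuadPhase_le _ _ _ _) (norm_nonneg _)
        (norm_truncQuadPhase_le _ _ _ _)
    · rw [if_neg hk, zero_add]
      exact norm_sum_truncQuadPhase_mul_conj_le a b M (hb k hk)
  have hvdc := sq_card_mul_norm_sum_sq_le u (Icc 1 (M : ℤ)) (Ico 0 (H : ℤ)) (Icc 1 (M + H : ℤ))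
    (fun n hn => if_neg hn) (fun n hn h hh => by simp only [mem_Icc, mem_Ico] at *; omega)
  have hD : #(Ico 0 (H : ℤ)) = H := by simp
  have hW : #(Icc 1 (M + H : ℤ)) = M + H := by
    rw [Int.card_Icc, add_sub_cancel_right, ← Nat.cast_add, Int.toNat_natCast]
  rw [hD, hW, sum_truncQuadPhase] at hvdc
  calc (H : ℝ) ^ 2 * ‖weylSum a b M‖ ^ 2
      ≤ ((M + H : ℕ) : ℝ) * ∑ h ∈ Ico 0 (H : ℤ), ∑ h' ∈ Ico 0 (H : ℤ),
          ‖∑ n ∈ Icc 1 (M : ℤ), u (n + (h' - h)) * conj (u n)‖ := hvdc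
    _ ≤ ((M + H : ℕ) : ℝ) * ∑ h ∈ Ico 0 (H : ℤ), ∑ h' ∈ Ico 0 (H : ℤ),
          ((if h' - h = 0 then (M : ℝ) else 0) + B (h' - h)) := by
        gcongr
        exact hcorr _
    _ = (M + H) * (H * M + ∑ h ∈ Ico 0 (H : ℤ), ∑ h' ∈ Ico 0 (H : ℤ), B (h' - h)) := by
        have hdiag : ∑ h ∈ Ico 0 (H : ℤ), ∑ h' ∈ Ico 0 (H : ℤ),
            (if h' - h = 0 then (M : ℝ) else 0) = H * M := by
          simp_rw [sub_eq_zero, sum_ite_eq']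
          rw [sum_congr rfl fun h hh => if_pos hh]
          simp
        rw [sum_congr rfl fun h _ => sum_add_distrib, sum_add_distrib, hdiag, Nat.cast_add]

theorem tendsto_norm_weylSum_div_of_exp_ne_one {a b : ℝ}
    (hb : ∀ k : ℤ, k ≠ 0 → Complex.exp (↑(2 * b * k) * Complex.I) ≠ 1) :
    Tendsto (fun M : ℕ => ‖weylSum a b M‖ / M) atTop (nhds 0) := by
  have hsq (H : ℕ) (hH : 0 < H) :
      ∀ᶠ M : ℕ in atTop, (‖weylSum a b M‖ / M) ^ 2 < 2 / (H : ℝ) := by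
    obtain ⟨C, hC⟩ := exists_sq_mul_norm_weylSum_sq_le (a := a) hb H
    have hlim : Tendsto (fun M : ℕ => (1 + H / (M : ℝ)) * (1 / H + C / H ^ 2 / M)) atTop
        (nhds (1 / H : ℝ)) := by
      simpa using ((tendsto_const_nhds (x := (1 : ℝ))).add
        (tendsto_const_div_atTop_nhds_zero_nat (H : ℝ))).mul
        ((tendsto_const_nhds (x := 1 / (H : ℝ))).add
          (tendsto_const_div_atTop_nhds_zero_nat (C / H ^ 2)))
    have hH' : (0 : ℝ) < H := by exact_mod_cast hH
    filter_upwards [hlim.eventually_lt_const (u := 2 / (H : ℝ)) (by gcongr; norm_num),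
      eventually_gt_atTop 0] with M hM hM0
    refine lt_of_le_of_lt ?_ hM
    have hM' : (0 : ℝ) < M := by exact_mod_cast hM0
    have hbound : (1 + H / (M : ℝ)) * (1 / H + C / H ^ 2 / M) =
        (M + H) * (H * M + C) / (H ^ 2 * M ^ 2) := by
      field_simp
    rw [hbound, div_pow, div_le_div_iff₀ (by positivity) (by positivity)]
    nlinarith [hC M]
  refine tendsto_order.2 ⟨fun ε hε => Eventually.of_forall fun M => hε.trans_le (by positivity),
    fun ε hε => ?_⟩
  obtain ⟨H, hH⟩ := exists_nat_gt (2 / ε ^ 2)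
  have hH0 : (0 : ℝ) < H := lt_trans (by positivity) hH
  filter_upwards [hsq H (by exact_mod_cast hH0)] with M hM
  refine lt_of_pow_lt_pow_left₀ 2 hε.le (hM.trans ?_)
  rw [div_lt_iff₀ hH0, mul_comm]
  rwa [div_lt_iff₀ (by positivity)] at hH

theorem tendsto_norm_weylSum_div {a b : ℝ} (h : ¬(a ∈ ratMulPi ∧ b ∈ ratMulPi)) :
    Tendsto (fun M : ℕ => ‖weylSum a b M‖ / M) atTop (nhds 0) := by
  by_cases hb : b ∈ ratMulPi
  · exact tendsto_norm_weylSum_div_of_mem_ratMulPi (fun ha => h ⟨ha, hb⟩) hb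
  · refine tendsto_norm_weylSum_div_of_exp_ne_one fun k hk hexp => hb ?_
    refine mem_ratMulPi_of_exp_eq_one (k := 2 * k) (mul_ne_zero two_ne_zero hk) ?_
    rw [← hexp]
    push_cast
    ring_nf

theorem norm_weylSum_div_mem_Icc (a b : ℝ) (M : ℕ) : ‖weylSum a b M‖ / M ∈ Set.Icc 0 1 :=
  ⟨by positivity, div_le_one_of_le₀ (norm_weylSum_le a b M) M.cast_nonneg⟩

theorem sum_sum_exp_eq_weylSum_mul (ω₁ ω₂ ψ₁ ψ₂ : ℝ) (M N : ℕ) :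
    ∑ n ∈ Icc 1 N, ∑ m ∈ Icc 1 M, Complex.exp
        (↑(ω₁ * (m : ℝ) + ω₂ * (m : ℝ) ^ 2 + ψ₁ * (n : ℝ) + ψ₂ * (n : ℝ) ^ 2) * Complex.I) =
      weylSum ω₁ ω₂ M * weylSum ψ₁ ψ₂ N := by
  rw [weylSum, weylSum, mul_comm, sum_mul_sum]
  refine sum_congr rfl fun n _ => sum_congr rfl fun m _ => ?_
  rw [quadPhase, quadPhase, ← Complex.exp_add]
  push_cast
  ring_nf

theorem sum_sum_cos_eq_re_weylSum_mul (ω₁ ω₂ ψ₁ ψ₂ : ℝ) (M N : ℕ) :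
    ∑ n ∈ Icc 1 N, ∑ m ∈ Icc 1 M,
        Real.cos (ω₁ * (m : ℝ) + ω₂ * (m : ℝ) ^ 2 + ψ₁ * (n : ℝ) + ψ₂ * (n : ℝ) ^ 2) =
      (weylSum ω₁ ω₂ M * weylSum ψ₁ ψ₂ N).re := by
  simp only [← sum_sum_exp_eq_weylSum_mul, Complex.re_sum, Complex.exp_ofReal_mul_I_re]

theorem sum_sum_sin_eq_im_weylSum_mul (ω₁ ω₂ ψ₁ ψ₂ : ℝ) (M N : ℕ) :
    ∑ n ∈ Icc 1 N, ∑ m ∈ Icc 1 M,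
        Real.sin (ω₁ * (m : ℝ) + ω₂ * (m : ℝ) ^ 2 + ψ₁ * (n : ℝ) + ψ₂ * (n : ℝ) ^ 2) =
      (weylSum ω₁ ω₂ M * weylSum ψ₁ ψ₂ N).im := by
  simp only [← sum_sum_exp_eq_weylSum_mul, Complex.im_sum, Complex.exp_ofReal_mul_I_im]

theorem norm_one_div_mul_le {r : ℝ} {z w : ℂ} (h : |r| ≤ ‖z * w‖) (M N : ℕ) :
    ‖1 / ((M : ℝ) * N) * r‖ ≤ ‖z‖ / M * (‖w‖ / N) := by
  rw [norm_mul, Real.norm_of_nonneg (by positivity), Real.norm_eq_abs]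
  rw [norm_mul] at h
  calc 1 / ((M : ℝ) * N) * |r| ≤ 1 / ((M : ℝ) * N) * (‖z‖ * ‖w‖) := by gcongr
    _ = ‖z‖ / M * (‖w‖ / N) := by ring

/-- There exists a countable subset `C` of `(0,π)⁴` such that for every
`(ω₁,ω₂,ψ₁,ψ₂) ∈ (0,π)⁴` outside `C`, both
`(1/(MN)) Σ_{n=1}^{N} Σ_{m=1}^{M} cos(ω₁ m + ω₂ m² + ψ₁ n + ψ₂ n²) → 0` and
`(1/(MN)) Σ_{n=1}^{N} Σ_{m=1}^{M} sin(ω₁ m + ω₂ m² + ψ₁ n + ψ₂ n²) → 0`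
as `min{M,N} → ∞`. -/
theorem stmt2 :
    ∃ C : Set (ℝ × ℝ × ℝ × ℝ), C.Countable ∧
      ∀ ω₁ ω₂ ψ₁ ψ₂ : ℝ, ω₁ ∈ Set.Ioo 0 π → ω₂ ∈ Set.Ioo 0 π →
        ψ₁ ∈ Set.Ioo 0 π → ψ₂ ∈ Set.Ioo 0 π → (ω₁, ω₂, ψ₁, ψ₂) ∉ C →
        Tendsto (fun MN : ℕ × ℕ =>
            (1 / ((MN.1 : ℝ) * MN.2)) *
              ∑ n ∈ Finset.Icc 1 MN.2, ∑ m ∈ Finset.Icc 1 MN.1,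
                Real.cos (ω₁ * (m : ℝ) + ω₂ * (m : ℝ) ^ 2 + ψ₁ * (n : ℝ) + ψ₂ * (n : ℝ) ^ 2))
          atTop (nhds 0) ∧
        Tendsto (fun MN : ℕ × ℕ =>
            (1 / ((MN.1 : ℝ) * MN.2)) *
              ∑ n ∈ Finset.Icc 1 MN.2, ∑ m ∈ Finset.Icc 1 MN.1,
                Real.sin (ω₁ * (m : ℝ) + ω₂ * (m : ℝ) ^ 2 + ψ₁ * (n : ℝ) + ψ₂ * (n : ℝ) ^ 2))
          atTop (nhds 0) := by
  have hQ : ratMulPi.Countable := Set.countable_range _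
  refine ⟨ratMulPi ×ˢ ratMulPi ×ˢ ratMulPi ×ˢ ratMulPi, hQ.prod (hQ.prod (hQ.prod hQ)),
    fun ω₁ ω₂ ψ₁ ψ₂ _ _ _ _ hC => ?_⟩
  have hsmall : ¬(ω₁ ∈ ratMulPi ∧ ω₂ ∈ ratMulPi) ∨ ¬(ψ₁ ∈ ratMulPi ∧ ψ₂ ∈ ratMulPi) := by
    simp only [Set.mem_prod] at hC
    tauto
  have hprod := tendsto_mul_prod_of_tendsto_zero_or (norm_weylSum_div_mem_Icc ω₁ ω₂)
    (norm_weylSum_div_mem_Icc ψ₁ ψ₂) (hsmall.imp tendsto_norm_weylSum_div tendsto_norm_weylSum_div)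
  rw [prod_atTop_atTop_eq] at hprod
  constructor
  · refine squeeze_zero_norm (fun MN => norm_one_div_mul_le ?_ MN.1 MN.2) hprod
    rw [sum_sum_cos_eq_re_weylSum_mul]
    exact Complex.abs_re_le_norm _
  · refine squeeze_zero_norm (fun MN => norm_one_div_mul_le ?_ MN.1 MN.2) hprod
    rw [sum_sum_sin_eq_im_weylSum_mul]
    exact Complex.abs_im_le_norm _
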